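/- Let ⟨A,∧,∨,→,∼,1⟩ be a Nelson algebra. Then for all x,y in A the strong implication is recovered from two applications of the weak one: x→y = x↣(x↣y), where x↣y:=(x→y)∧(∼y→∼x). -/

import Mathlib

/-- A Nelson algebra ⟨A,∧,∨,→,∼,1⟩ of type (2,2,2,1,0). -/
structure NelsonAlgebra (A : Type*) where
  meet : A → A → A
  join : A → A → A
  imp : A → A → A
  neg : A → A
  one : A
  n1 : ∀ x y, meet x (join x y) = x
  n2 : ∀ x y z, meet x (join y z) = join (meet z x) (meet y x)
  n3 : ∀ x, neg (neg x) = x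
  n4 : ∀ x y, neg (meet x y) = join (neg x) (neg y)
  n5 : ∀ x y, meet x (neg x) = meet (meet x (neg x)) (join y (neg y))
  n6 : ∀ x, imp x x = one
  n7 : ∀ x y, meet x (imp x y) = meet x (join (neg x) y)
  n8 : ∀ x y z, imp (meet x y) z = imp x (imp y z)

/-- The weak implication x↣y := (x→y)∧(∼y→∼x). -/
def NelsonAlgebra.wimp {A : Type*} (N : NelsonAlgebra A) (x y : A) : A :=
  N.meet (N.imp x y) (N.imp (N.neg y) (N.neg x))

/-!
Axioms N1 and N2 axiomatize distributive lattices, so a Nelson algebra is a distributive lattice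
with top `1`, a De Morgan involution `∼` satisfying the Kleene condition N5, and `→`.
The argument runs through the weak order `a ≼ b :↔ a ≤ ∼a ∨ b`. It is equivalent to
`a → b = 1`, so by N8 `→` is a residual of `∧` for it; it is a preorder with meets and (by N5)
joins; and, again by N5, it detects the lattice order: `a ≤ b` iff `a ≼ b` and `∼b ≼ ∼a`.
Moreover `∼(a → b)` and `a ∧ ∼b` are `≼`-equivalent. For `w := x ↣ y` this gives
`x → w = x → y` and `x → y ≤ ∼w → ∼x`, whose meet is the claim.
-/

/-- Nelson algebras in Rasiowa's lattice-based presentation (N-lattices). -/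
class NelsonLattice (A : Type*) extends DistribLattice A, OrderTop A where
  neg : A → A
  imp : A → A → A
  neg_neg (a : A) : neg (neg a) = a
  neg_inf (a b : A) : neg (a ⊓ b) = neg a ⊔ neg b
  inf_neg_le_sup_neg (a b : A) : a ⊓ neg a ≤ b ⊔ neg b
  imp_self (a : A) : imp a a = ⊤
  inf_imp_eq_inf_neg_sup (a b : A) : a ⊓ imp a b = a ⊓ (neg a ⊔ b)
  inf_imp (a b c : A) : imp (a ⊓ b) c = imp a (imp b c)

namespace NelsonAlgebra

variable {A : Type*} (N : NelsonAlgebra A)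

lemma meet_self (x : A) : N.meet x x = x := by
  have hx : N.join (N.meet x x) (N.meet x x) = x := (N.n2 x x x).symm.trans (N.n1 x x)
  have h : N.meet (N.meet x x) x = N.meet x x := by
    simpa only [hx] using N.n1 (N.meet x x) (N.meet x x)
  calc N.meet x x = N.meet x (N.join (N.meet x x) (N.meet x x)) := by rw [hx]
    _ = x := by rw [N.n2, h, hx]

lemma join_meet_left_self (z x : A) : N.join (N.meet z x) x = x :=
  calc N.join (N.meet z x) x = N.meet x (N.join x z) := by rw [N.n2, N.meet_self]
    _ = x := N.n1 x z

lemma join_self (x : A) : N.join x x = x := by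
  simpa only [N.meet_self] using N.join_meet_left_self x x

lemma meet_comm (x y : A) : N.meet x y = N.meet y x := by
  simpa only [N.join_self] using N.n2 x y y

lemma meet_right_idem (y x : A) : N.meet (N.meet y x) x = N.meet y x := by
  simpa only [N.join_meet_left_self] using N.n1 (N.meet y x) x

lemma join_meet_right_self (x y : A) : N.join x (N.meet y x) = x := by
  have hyx : N.meet (N.meet y x) (N.join x (N.meet y x)) = N.meet y x := by
    rw [N.n2, N.meet_self, N.meet_comm x, N.meet_right_idem, N.join_self]
  set s := N.join x (N.meet y x)
  calc s = N.meet s s := (N.meet_self s).symm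
    _ = N.join (N.meet (N.meet y x) s) (N.meet x s) := N.n2 s x (N.meet y x)
    _ = x := by rw [hyx, N.n1, N.join_meet_left_self]

lemma meet_join_right_self (y x : A) : N.meet y (N.join x y) = y := by
  rw [N.n2, N.meet_self, N.join_meet_right_self]

lemma join_comm (x y : A) : N.join x y = N.join y x := by
  have h (x y : A) : N.meet (N.join y x) (N.join x y) = N.join y x := by
    rw [N.n2, N.n1, N.meet_join_right_self]
  calc N.join x y = N.meet (N.join x y) (N.join y x) := (h y x).symm
    _ = N.meet (N.join y x) (N.join x y) := N.meet_comm _ _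
    _ = N.join y x := h x y

lemma meet_eq_left_trans {a b c : A} (hab : N.meet a b = a) (hbc : N.meet b c = b) :
    N.meet a c = a := by
  have hbc' : N.join b c = c := by simpa only [hbc] using N.join_meet_left_self b c
  calc N.meet a c = N.meet a (N.join b c) := by rw [hbc']
    _ = N.join (N.meet c a) (N.meet b a) := N.n2 a b c
    _ = a := by rw [N.meet_comm b a, hab, N.join_meet_left_self]

lemma meet_meet_eq_left {u a b : A} (hua : N.meet u a = u) (hub : N.meet u b = u) :
    N.meet u (N.meet a b) = u := by
  have hbu : N.join b u = b := by
    simpa only [N.meet_comm b u, hub] using N.join_meet_right_self b u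
  have hab : N.meet a b = N.join u (N.meet a b) :=
    calc N.meet a b = N.meet a (N.join b u) := by rw [hbu]
      _ = N.join u (N.meet a b) := by rw [N.n2, hua, N.meet_comm b a]
  rw [hab, N.n1]

lemma meet_join_eq_left {u v x : A} (hu : N.meet u x = u) (hv : N.meet v x = v) :
    N.meet (N.join u v) x = N.join u v := by
  rw [N.meet_comm, N.n2, hu, hv, N.join_comm]

abbrev toLattice : Lattice A where
  le a b := N.meet a b = a
  le_refl := N.meet_self
  le_trans _ _ _ := N.meet_eq_left_trans
  le_antisymm a b hab hba := hab.symm.trans ((N.meet_comm a b).trans hba)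
  sup := N.join
  le_sup_left := N.n1
  le_sup_right a b := N.meet_join_right_self b a
  sup_le _ _ _ := N.meet_join_eq_left
  inf := N.meet
  inf_le_left a b := by rw [N.meet_comm a b, N.meet_right_idem]
  inf_le_right := N.meet_right_idem
  le_inf _ _ _ := N.meet_meet_eq_left

abbrev toDistribLattice : DistribLattice A :=
  letI := N.toLattice
  DistribLattice.ofInfSupLe fun a b c => le_of_eq <| by
    change N.meet a (N.join b c) = N.join (N.meet a b) (N.meet a c)
    rw [N.n2, N.join_comm, N.meet_comm b, N.meet_comm c]

lemma meet_one (x : A) : N.meet x N.one = x := by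
  let _ := N.toLattice
  have h : N.join x (N.neg x) ≤ N.one := by
    change N.meet _ _ = _
    simpa only [N.n6, N.meet_join_right_self] using
      N.n7 (N.join x (N.neg x)) (N.join x (N.neg x))
  exact le_sup_left.trans h

abbrev toNelsonLattice : NelsonLattice A :=
  letI := N.toLattice
  { N.toDistribLattice with
    top := N.one
    le_top := N.meet_one
    neg := N.neg
    imp := N.imp
    neg_neg := N.n3
    neg_inf := N.n4
    inf_neg_le_sup_neg := fun a b => (N.n5 a b).symm
    imp_self := N.n6
    inf_imp_eq_inf_neg_sup := N.n7
    inf_imp := N.n8 }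

end NelsonAlgebra

theorem le_of_le_sup_of_inf_le {L : Type*} [DistribLattice L] {u v w c : L} (h : u ≤ v ⊔ w)
    (hv : u ⊓ v ≤ c) (hw : u ⊓ w ≤ c) : u ≤ c :=
  calc u ≤ u ⊓ (v ⊔ w) := le_inf le_rfl h
    _ = u ⊓ v ⊔ u ⊓ w := inf_sup_left _ _ _
    _ ≤ c := sup_le hv hw

namespace NelsonLattice

variable {A : Type*} [NelsonLattice A] {a b c u v : A}

local prefix:max "∼" => NelsonLattice.neg
local infixr:60 " ⇒ " => NelsonLattice.imp

lemma neg_sup (a b : A) : ∼(a ⊔ b) = ∼a ⊓ ∼b := by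
  rw [← neg_neg (∼a ⊓ ∼b), neg_inf, neg_neg, neg_neg]

lemma neg_le_neg (h : a ≤ b) : ∼b ≤ ∼a := by
  rw [← inf_eq_left.mpr h, neg_inf]
  exact le_sup_right

lemma neg_le_neg_iff : ∼a ≤ ∼b ↔ b ≤ a :=
  ⟨fun h => by simpa only [neg_neg] using neg_le_neg h, neg_le_neg⟩

lemma imp_top (a : A) : a ⇒ ⊤ = ⊤ := by
  rw [← imp_self a, ← inf_imp, inf_idem]

lemma imp_eq_top_of_le (h : a ≤ b) : a ⇒ b = ⊤ := by
  rw [← inf_eq_left.mpr h, inf_imp, imp_self, imp_top]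

lemma imp_imp_self (a b : A) : a ⇒ (a ⇒ b) = a ⇒ b := by
  rw [← inf_imp, inf_idem]

def WeakLE (a b : A) : Prop := a ≤ ∼a ⊔ b

local infix:50 " ≼ " => WeakLE

lemma weakLE_iff : a ≼ b ↔ a ≤ ∼a ⊔ b := Iff.rfl

lemma weakLE_iff_inf_neg_le : a ≼ b ↔ a ⊓ ∼b ≤ ∼a := by
  rw [weakLE_iff, ← neg_le_neg_iff, neg_sup, neg_neg]

lemma weakLE_iff_imp_eq_top : a ≼ b ↔ a ⇒ b = ⊤ := by
  constructor
  · intro h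
    have hle : a ≤ a ⇒ b := by
      rw [← inf_eq_left, inf_imp_eq_inf_neg_sup]
      exact inf_eq_left.mpr h
    rw [← imp_imp_self]
    exact imp_eq_top_of_le hle
  · intro h
    have h' := inf_imp_eq_inf_neg_sup a b
    rw [h, inf_top_eq] at h'
    exact inf_eq_left.mp h'.symm

lemma inf_weakLE_iff : a ⊓ b ≼ c ↔ a ≼ b ⇒ c := by
  simp only [weakLE_iff_imp_eq_top, inf_imp]

lemma weakLE_of_le (h : a ≤ b) : a ≼ b := h.trans le_sup_right

lemma weakLE_refl (a : A) : a ≼ a := weakLE_of_le le_rfl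

lemma WeakLE.trans (hab : a ≼ b) (hbc : b ≼ c) : a ≼ c := by
  refine le_of_le_sup_of_inf_le hab (inf_le_right.trans le_sup_left) ?_
  refine le_of_le_sup_of_inf_le (inf_le_right.trans hbc) ?_ (inf_le_right.trans le_sup_right)
  exact (inf_le_inf_right _ inf_le_left).trans ((weakLE_iff_inf_neg_le.mp hab).trans le_sup_left)

lemma weakLE_inf (hb : a ≼ b) (hc : a ≼ c) : a ≼ b ⊓ c := by
  rw [weakLE_iff, sup_inf_left]
  exact le_inf hb hc

lemma WeakLE.inf_left (h : a ≼ b) (c : A) : c ⊓ a ≼ c ⊓ b :=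
  weakLE_inf (weakLE_of_le inf_le_left) ((weakLE_of_le inf_le_right).trans h)

lemma sup_weakLE (ha : a ≼ c) (hb : b ≼ c) : a ⊔ b ≼ c := by
  have key (a b : A) (ha : a ≼ c) (hb : b ≼ c) : a ≤ ∼(a ⊔ b) ⊔ c := by
    rw [neg_sup]
    refine le_of_le_sup_of_inf_le ha ?_ (inf_le_right.trans le_sup_right)
    refine le_of_le_sup_of_inf_le (inf_neg_le_sup_neg a b) ?_
      ((inf_le_inf_right _ inf_le_right).trans le_sup_left)
    calc a ⊓ ∼a ⊓ b ≤ ∼a ⊓ (∼b ⊔ c) :=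
          le_inf (inf_le_left.trans inf_le_right) (inf_le_right.trans hb)
      _ = ∼a ⊓ ∼b ⊔ ∼a ⊓ c := inf_sup_left _ _ _
      _ ≤ ∼a ⊓ ∼b ⊔ c := sup_le_sup_left inf_le_right _
  exact sup_le (key a b ha hb) (by simpa only [sup_comm] using key b a hb ha)

lemma le_of_weakLE (h : a ≼ b) (h' : ∼b ≼ ∼a) : a ≤ b := by
  have hb : a ⊓ ∼b ≤ b := by
    have := weakLE_iff_inf_neg_le.mp h'
    rwa [neg_neg, neg_neg, inf_comm] at this
  refine le_of_le_sup_of_inf_le h ?_ inf_le_right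
  exact le_of_le_sup_of_inf_le (inf_neg_le_sup_neg a b) inf_le_right
    ((inf_le_inf_right _ inf_le_left).trans hb)

lemma inf_neg_weakLE (a c : A) : a ⊓ ∼a ≼ c := by
  refine inf_le_right.trans ?_
  rw [neg_inf, neg_neg]
  exact le_sup_left.trans le_sup_left

lemma imp_inf_weakLE (a b : A) : (a ⇒ b) ⊓ a ≼ b := inf_weakLE_iff.mpr (weakLE_refl _)

lemma neg_weakLE_imp (a b : A) : ∼a ≼ a ⇒ b := by
  rw [← inf_weakLE_iff, inf_comm]
  exact inf_neg_weakLE a b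

lemma imp_weakLE_imp_right (h : b ≼ c) (a : A) : a ⇒ b ≼ a ⇒ c :=
  inf_weakLE_iff.mp ((imp_inf_weakLE a b).trans h)

lemma weakLE_of_le_neg_sup (h : u ≤ ∼a ⊔ v) (hu : u ⊓ ∼a ≤ a) : u ≼ v := by
  have hle : u ≤ u ⊓ ∼a ⊔ u ⊓ v := by
    rw [← inf_sup_left]
    exact le_inf le_rfl h
  refine (weakLE_of_le hle).trans (sup_weakLE ?_ (weakLE_of_le inf_le_right))
  exact (weakLE_of_le (le_inf hu inf_le_right)).trans (inf_neg_weakLE a v)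

lemma neg_sup_neg_imp (a b : A) : ∼a ⊔ ∼(a ⇒ b) = ∼a ⊔ a ⊓ ∼b := by
  simpa only [neg_inf, neg_sup, neg_neg] using congrArg neg (inf_imp_eq_inf_neg_sup a b)

lemma neg_imp_weakLE : ∼(a ⇒ b) ≼ a ⊓ ∼b := by
  refine weakLE_of_le_neg_sup (a := a) (by rw [← neg_sup_neg_imp]; exact le_sup_right) ?_
  have := weakLE_iff_inf_neg_le.mp (neg_weakLE_imp a b)
  rwa [neg_neg, inf_comm] at this

lemma weakLE_neg_imp : a ⊓ ∼b ≼ ∼(a ⇒ b) :=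
  weakLE_of_le_neg_sup (a := a) (by rw [neg_sup_neg_imp]; exact le_sup_right)
    (inf_le_left.trans inf_le_left)

lemma imp_inf_inf_neg_weakLE : (a ⇒ b) ⊓ (a ⊓ ∼b) ≼ c := by
  have hmp : (a ⇒ b) ⊓ (a ⊓ ∼b) ≼ b := by
    rw [← inf_assoc]
    exact (weakLE_of_le inf_le_left).trans (imp_inf_weakLE a b)
  exact (weakLE_inf hmp (weakLE_of_le (inf_le_right.trans inf_le_right))).trans
    (inf_neg_weakLE b c)

def wimp (a b : A) : A := (a ⇒ b) ⊓ (∼b ⇒ ∼a)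

lemma neg_wimp_weakLE : ∼(wimp a b) ≼ a ⊓ ∼b := by
  rw [wimp, neg_inf]
  refine sup_weakLE neg_imp_weakLE ?_
  have : ∼(∼b ⇒ ∼a) ≼ ∼b ⊓ ∼∼a := neg_imp_weakLE
  rwa [neg_neg, inf_comm] at this

lemma neg_wimp_weakLE_neg_imp : ∼(wimp a b) ≼ ∼(a ⇒ b) :=
  neg_wimp_weakLE.trans weakLE_neg_imp

lemma imp_wimp (a b : A) : a ⇒ wimp a b = a ⇒ b := by
  apply le_antisymm
  · refine le_of_weakLE ?_ ?_
    · have h := imp_weakLE_imp_right (weakLE_of_le (inf_le_left : wimp a b ≤ a ⇒ b)) a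
      rwa [imp_imp_self] at h
    · have : ∼(a ⇒ b) ≼ a ⊓ ∼(wimp a b) :=
        weakLE_inf (neg_imp_weakLE.trans (weakLE_of_le inf_le_left))
          (weakLE_of_le (neg_le_neg inf_le_left))
      exact this.trans weakLE_neg_imp
  · refine le_of_weakLE ?_ ?_
    · refine inf_weakLE_iff.mp (weakLE_inf (weakLE_of_le inf_le_left) (inf_weakLE_iff.mp ?_))
      rw [inf_assoc]
      exact imp_inf_inf_neg_weakLE
    · exact neg_imp_weakLE.trans ((weakLE_of_le inf_le_right).trans neg_wimp_weakLE_neg_imp)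

lemma imp_le_neg_wimp_imp (a b : A) : a ⇒ b ≤ ∼(wimp a b) ⇒ ∼a :=
  le_of_weakLE (inf_weakLE_iff.mp ((neg_wimp_weakLE.inf_left _).trans imp_inf_inf_neg_weakLE))
    (neg_imp_weakLE.trans ((weakLE_of_le inf_le_left).trans neg_wimp_weakLE_neg_imp))

theorem imp_eq_wimp_wimp (a b : A) : a ⇒ b = wimp a (wimp a b) := by
  change a ⇒ b = (a ⇒ wimp a b) ⊓ (∼(wimp a b) ⇒ ∼a)
  rw [imp_wimp, inf_eq_left.mpr (imp_le_neg_wimp_imp a b)]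

end NelsonLattice

theorem nelson_imp_eq_wimp_wimp {A : Type*} (N : NelsonAlgebra A) (x y : A) :
    N.imp x y = N.wimp x (N.wimp x y) :=
  @NelsonLattice.imp_eq_wimp_wimp A N.toNelsonLattice x y
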